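/- arXiv:2204.04661 — 3 statements merged into one kernel-verified Lean document; each statement's English description precedes it below -/
import Mathlib

section
/- Let X be a countable type and k a natural number. Then there exists a function f : X → ℝ such that the map sending each multiset S over X of cardinality at most k to ∑_{x ∈ S} f(x) is injective on multisets of cardinality at most k. (That is, if S and T are multisets over X with |S| ≤ k, |T| ≤ k, and ∑_{x∈S} f(x) = ∑_{x∈T} f(x), then S = T.) -/
lemma lemA (k : ℕ) (hk : 1 ≤ k) : ∀ N, ∀ A B : Multiset ℕ, Multiset.card A ≤ k →
    Multiset.card B ≤ k →
    (A.map (fun n => (k+1)^n)).sum = N → (B.map (fun n => (k+1)^n)).sum = N → A = B := by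
  intro N
  induction N using Nat.strong_induction_on with
  | _ N IH =>
    intro A B hA hB hAs hBs
    rcases Nat.eq_zero_or_pos N with hN | hN
    · subst hN
      have zer : ∀ C : Multiset ℕ, (C.map (fun n => (k+1)^n)).sum = 0 → C = 0 := by
        intro C hC
        by_contra h
        obtain ⟨a, ha⟩ := Multiset.exists_mem_of_ne_zero h
        have h1 : (k+1)^a ≤ (C.map (fun n => (k+1)^n)).sum :=
          Multiset.single_le_sum (by intro x hx; positivity) _ (Multiset.mem_map_of_mem _ ha)
        have h2 : 0 < (k+1)^a := pow_pos (by omega) a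
        omega
      rw [zer A hAs, zer B hBs]
    · have key : ∀ C : Multiset ℕ, Multiset.card C ≤ k →
          (C.map (fun n => (k+1)^n)).sum = N →
          N = C.count 0 + (k+1) * (((C.filter (· ≠ 0)).map (· - 1)).map (fun n => (k+1)^n)).sum := by
        intro C hC hCs
        have hsplit : C.filter (· = 0) + C.filter (· ≠ 0) = C := by
          simpa using Multiset.filter_add_not (· = 0) C
        have h1 : ((C.filter (· = 0)).map (fun n => (k+1)^n)).sum = C.count 0 := by
          have : C.filter (· = 0) = Multiset.replicate (C.count 0) 0 := by
            rw [← Multiset.filter_eq]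
            congr 1
            ext x
            simp [eq_comm]
          rw [this]
          simp [Multiset.map_replicate, Multiset.sum_replicate]
        have h2 : ((C.filter (· ≠ 0)).map (fun n => (k+1)^n)).sum =
            (k+1) * (((C.filter (· ≠ 0)).map (· - 1)).map (fun n => (k+1)^n)).sum := by
          rw [Multiset.map_map, ← Multiset.sum_map_mul_left]
          apply congrArg
          apply Multiset.map_congr rfl
          intro x hx
          have hx0 : x ≠ 0 := (Multiset.mem_filter.mp hx).2
          simp only [Function.comp_apply]
          conv_lhs => rw [show x = (x-1)+1 by omega]
          rw [pow_succ]
          ring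
        calc N = ((C.filter (· = 0) + C.filter (· ≠ 0)).map (fun n => (k+1)^n)).sum := by
                rw [hsplit, hCs]
          _ = _ := by rw [Multiset.map_add, Multiset.sum_add, h1, h2]
      have hA' := key A hA hAs
      have hB' := key B hB hBs
      have hcA : A.count 0 ≤ k := le_trans (Multiset.count_le_card _ _) hA
      have hcB : B.count 0 ≤ k := le_trans (Multiset.count_le_card _ _) hB
      have hmod : ∀ (c m : ℕ), c ≤ k → (c + (k+1) * m) % (k+1) = c := by
        intro c m hc
        rw [Nat.add_mul_mod_self_left, Nat.mod_eq_of_lt (by omega)]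
      have hcount : A.count 0 = B.count 0 := by
        have h1 := hmod (A.count 0)
          (((A.filter (· ≠ 0)).map (· - 1)).map (fun n => (k+1)^n)).sum hcA
        have h2 := hmod (B.count 0)
          (((B.filter (· ≠ 0)).map (· - 1)).map (fun n => (k+1)^n)).sum hcB
        rw [← hA'] at h1
        rw [← hB'] at h2
        omega
      have hNAB : (((A.filter (· ≠ 0)).map (· - 1)).map (fun n => (k+1)^n)).sum =
          (((B.filter (· ≠ 0)).map (· - 1)).map (fun n => (k+1)^n)).sum := by
        apply Nat.eq_of_mul_eq_mul_left (show 0 < k + 1 by omega)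
        omega
      have hNAlt : (((A.filter (· ≠ 0)).map (· - 1)).map (fun n => (k+1)^n)).sum < N := by
        rcases Nat.eq_zero_or_pos (((A.filter (· ≠ 0)).map (· - 1)).map (fun n => (k+1)^n)).sum
          with h | h
        · omega
        · have : (((A.filter (· ≠ 0)).map (· - 1)).map (fun n => (k+1)^n)).sum <
              (k+1) * (((A.filter (· ≠ 0)).map (· - 1)).map (fun n => (k+1)^n)).sum := by
            nlinarith
          omega
      have hA1 : (A.filter (· ≠ 0)).map (· - 1) = (B.filter (· ≠ 0)).map (· - 1) := by
        apply IH _ hNAlt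
        · rw [Multiset.card_map]
          exact le_trans (Multiset.card_le_card (Multiset.filter_le _ _)) hA
        · rw [Multiset.card_map]
          exact le_trans (Multiset.card_le_card (Multiset.filter_le _ _)) hB
        · rfl
        · omega
      have recov : ∀ C : Multiset ℕ, C = Multiset.replicate (C.count 0) 0 +
          ((C.filter (· ≠ 0)).map (· - 1)).map (· + 1) := by
        intro C
        have hsplit : C.filter (· = 0) + C.filter (· ≠ 0) = C := by
          simpa using Multiset.filter_add_not (· = 0) C
        have h1 : C.filter (· = 0) = Multiset.replicate (C.count 0) 0 := by
          rw [← Multiset.filter_eq]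
          congr 1
          ext x
          simp [eq_comm]
        have h2 : ((C.filter (· ≠ 0)).map (· - 1)).map (· + 1) = C.filter (· ≠ 0) := by
          rw [Multiset.map_map]
          conv_rhs => rw [← Multiset.map_id (C.filter (· ≠ 0))]
          apply Multiset.map_congr rfl
          intro x hx
          have hx0 : x ≠ 0 := (Multiset.mem_filter.mp hx).2
          simp only [Function.comp_apply, id]
          omega
        rw [h2, ← h1, hsplit]
      rw [recov A, recov B, hcount, hA1]

lemma lemB (k : ℕ) (hk : 1 ≤ k) (A B : Multiset ℕ) (hA : Multiset.card A ≤ k)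
    (hB : Multiset.card B ≤ k)
    (hsum : (A.map (fun n => ((k:ℝ)+1)⁻¹ ^ n)).sum = (B.map (fun n => ((k:ℝ)+1)⁻¹ ^ n)).sum) :
    A = B := by
  set M := (A + B).sum with hM
  have hbound : ∀ n ∈ A + B, n ≤ M := by
    intro n hn
    exact Multiset.single_le_sum (fun x _ => Nat.zero_le x) _ hn
  have hbA : ∀ n ∈ A, n ≤ M := fun n hn => hbound n (Multiset.mem_add.mpr (Or.inl hn))
  have hbB : ∀ n ∈ B, n ≤ M := fun n hn => hbound n (Multiset.mem_add.mpr (Or.inr hn))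
  have keyR : ∀ C : Multiset ℕ, (∀ n ∈ C, n ≤ M) →
      (C.map (fun n => ((k:ℝ)+1)⁻¹ ^ n)).sum * ((k:ℝ)+1)^M =
      (((C.map (fun n => (k+1)^(M-n))).sum : ℕ) : ℝ) := by
    intro C hC
    rw [Nat.cast_multiset_sum, Multiset.map_map, ← Multiset.sum_map_mul_right]
    apply congrArg
    apply Multiset.map_congr rfl
    intro n hn
    have hnM : n ≤ M := hC n hn
    simp only [Function.comp_apply]
    push_cast
    rw [inv_pow, inv_mul_eq_div, div_eq_iff (by positivity), ← pow_add]
    congr 1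
    omega
  have hnat : (A.map (fun n => (k+1)^(M-n))).sum = (B.map (fun n => (k+1)^(M-n))).sum := by
    have h1 := keyR A hbA
    have h2 := keyR B hbB
    have : (((A.map (fun n => (k+1)^(M-n))).sum : ℕ) : ℝ) =
        (((B.map (fun n => (k+1)^(M-n))).sum : ℕ) : ℝ) := by
      rw [← h1, ← h2, hsum]
    exact_mod_cast this
  have hAB : A.map (M - ·) = B.map (M - ·) := by
    apply lemA k hk ((B.map (M - ·)).map (fun n => (k+1)^n)).sum
    · rw [Multiset.card_map]; exact hA
    · rw [Multiset.card_map]; exact hB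
    · rw [Multiset.map_map, Multiset.map_map]
      exact hnat
    · rfl
  have recover : ∀ C : Multiset ℕ, (∀ n ∈ C, n ≤ M) → (C.map (M - ·)).map (M - ·) = C := by
    intro C hC
    rw [Multiset.map_map]
    conv_rhs => rw [← Multiset.map_id C]
    apply Multiset.map_congr rfl
    intro x hx
    have := hC x hx
    simp only [Function.comp_apply, id]
    omega
  rw [← recover A hbA, hAB, recover B hbB]

theorem exists_injective_sum_decomposition (X : Type*) [Countable X] (k : ℕ) :
    ∃ f : X → ℝ, ∀ S T : Multiset X, Multiset.card S ≤ k → Multiset.card T ≤ k →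
      (S.map f).sum = (T.map f).sum → S = T := by
  rcases Nat.eq_zero_or_pos k with hk | hk
  · subst hk
    refine ⟨0, fun S T hS hT _ => ?_⟩
    rw [Multiset.card_eq_zero.mp (Nat.le_zero.mp hS), Multiset.card_eq_zero.mp (Nat.le_zero.mp hT)]
  obtain ⟨e, he⟩ := countable_iff_exists_injective X |>.mp ‹Countable X›
  refine ⟨fun x => ((k:ℝ)+1)⁻¹ ^ (e x), fun S T hS hT hsum => ?_⟩
  have hsum' : ((S.map e).map (fun n => ((k:ℝ)+1)⁻¹ ^ n)).sum =
      ((T.map e).map (fun n => ((k:ℝ)+1)⁻¹ ^ n)).sum := by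
    rw [Multiset.map_map, Multiset.map_map]
    exact hsum
  have := lemB k hk (S.map e) (T.map e)
    (by rw [Multiset.card_map]; exact hS) (by rw [Multiset.card_map]; exact hT) hsum'
  exact Multiset.map_injective he this
end

section
/- (Color refinement bounds message-passing networks with sum aggregation.) Let G, H be finite graphs with labellings col_G : V_G → ℝ^{d₀}, col_H : V_H → ℝ^{d₀}. Fix functions g_t : ℝ^{d_t} × ℝ^{d_t} → ℝ^{d_{t+1}} for t ∈ ℕ, and define vertex embeddings by f⁰(v) = col(v) and f^{t+1}(v) = g_t(f^t(v), ∑_{u ∈ N(v)} f^t(u)). Then for all t ∈ ℕ, all v ∈ V_G, w ∈ V_H: if cr^t_G(v) = cr^t_H(w) (the color-refinement labels at round t agree), then f^t_G(v) = f^t_H(w). -/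
/-- The type of color-refinement labels after `t` rounds, starting from labels in `L`. -/
def CRLabel (L : Type*) : ℕ → Type _
  | 0 => L
  | t + 1 => CRLabel L t × Multiset (CRLabel L t)

/-- Color refinement. -/
def cr {V : Type*} [Fintype V] (E : V → V → Prop) (hd : DecidableRel E)
    {L : Type*} (col : V → L) : (t : ℕ) → V → CRLabel L t
  | 0, v => col v
  | t + 1, v =>
      (cr E hd col t v,
        ((@Finset.filter V (fun u => E v u) (fun u => hd v u) Finset.univ).val).map
          (cr E hd col t))

/-- GIN-like message-passing embeddings with sum aggregation:
`f⁰(v) = col v`, `f^{t+1}(v) = g t (f^t v) (∑_{u ∈ N(v)} f^t u)`. -/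
def gnn {V : Type*} [Fintype V] (E : V → V → Prop) (hd : DecidableRel E)
    {d : ℕ → ℕ}
    (g : (t : ℕ) → (Fin (d t) → ℝ) → (Fin (d t) → ℝ) → (Fin (d (t + 1)) → ℝ))
    (col : V → Fin (d 0) → ℝ) : (t : ℕ) → V → Fin (d t) → ℝ
  | 0, v => col v
  | t + 1, v =>
      g t (gnn E hd g col t v)
        (∑ u ∈ @Finset.filter V (fun u => E v u) (fun u => hd v u) Finset.univ,
          gnn E hd g col t u)

/-- Interpretation of a CR label as an embedding. -/
def emb {d : ℕ → ℕ}
    (g : (t : ℕ) → (Fin (d t) → ℝ) → (Fin (d t) → ℝ) → (Fin (d (t + 1)) → ℝ)) :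
    (t : ℕ) → CRLabel (Fin (d 0) → ℝ) t → (Fin (d t) → ℝ)
  | 0, a => a
  | t + 1, a => g t (emb g t a.1) (a.2.map (emb g t)).sum

lemma gnn_eq_emb_cr {V : Type*} [Fintype V] (E : V → V → Prop) (hd : DecidableRel E)
    {d : ℕ → ℕ}
    (g : (t : ℕ) → (Fin (d t) → ℝ) → (Fin (d t) → ℝ) → (Fin (d (t + 1)) → ℝ))
    (col : V → Fin (d 0) → ℝ) : ∀ (t : ℕ) (v : V),
    gnn E hd g col t v = emb g t (cr E hd col t v) := by
  intro t
  induction t with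
  | zero => intro v; rfl
  | succ t ih =>
      intro v
      simp only [gnn, cr, emb, Multiset.map_map, Function.comp]
      rw [ih v, Finset.sum,
        Multiset.map_congr rfl fun u _ => ih u]

theorem cr_bounds_gnn {V W : Type*} [Fintype V] [Fintype W]
    (E : V → V → Prop) (hdE : DecidableRel E) (F : W → W → Prop) (hdF : DecidableRel F)
    {d : ℕ → ℕ}
    (g : (t : ℕ) → (Fin (d t) → ℝ) → (Fin (d t) → ℝ) → (Fin (d (t + 1)) → ℝ))
    (colG : V → Fin (d 0) → ℝ) (colH : W → Fin (d 0) → ℝ)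
    (t : ℕ) (v : V) (w : W)
    (h : cr E hdE colG t v = cr F hdF colH t w) :
    gnn E hdE g colG t v = gnn F hdF g colH t w := by
  rw [gnn_eq_emb_cr, gnn_eq_emb_cr, h]
end

section
/- (Sum aggregation over all vertices is bounded by the graph-level refinement.) In the setting of the previous statement, additionally suppose the multisets of round-t color-refinement labels of G and H coincide: {{cr^t_G(v) | v ∈ V_G}} = {{cr^t_H(w) | w ∈ V_H}}. Then ∑_{v ∈ V_G} f^t_G(v) = ∑_{w ∈ V_H} f^t_H(w). Hence any readout of the form ro(∑_v f^t(v)) cannot distinguish G from H. -/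
/-- Decode an embedding from a CR label. -/
def crToEmb {d : ℕ → ℕ}
    (g : (t : ℕ) → (Fin (d t) → ℝ) → (Fin (d t) → ℝ) → (Fin (d (t + 1)) → ℝ)) :
    (t : ℕ) → CRLabel (Fin (d 0) → ℝ) t → (Fin (d t) → ℝ)
  | 0, l => l
  | t + 1, (a, m) => g t (crToEmb g t a) ((m.map (crToEmb g t)).sum)

lemma gnn_eq_crToEmb {V : Type*} [Fintype V] (E : V → V → Prop) (hd : DecidableRel E)
    {d : ℕ → ℕ}
    (g : (t : ℕ) → (Fin (d t) → ℝ) → (Fin (d t) → ℝ) → (Fin (d (t + 1)) → ℝ))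
    (col : V → Fin (d 0) → ℝ) : ∀ (t : ℕ) (v : V),
    gnn E hd g col t v = crToEmb g t (cr E hd col t v) := by
  intro t
  induction t with
  | zero => intro v; rfl
  | succ t ih =>
      intro v
      show g t _ _ = g t _ _
      rw [ih v]
      rw [Finset.sum, Multiset.map_map]
      exact congrArg _ (congrArg Multiset.sum (Multiset.map_congr rfl fun u _ => ih u))

theorem graph_cr_bounds_sum_readout {V W : Type*} [Fintype V] [Fintype W]
    (E : V → V → Prop) (hdE : DecidableRel E) (F : W → W → Prop) (hdF : DecidableRel F)
    {d : ℕ → ℕ}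
    (g : (t : ℕ) → (Fin (d t) → ℝ) → (Fin (d t) → ℝ) → (Fin (d (t + 1)) → ℝ))
    (colG : V → Fin (d 0) → ℝ) (colH : W → Fin (d 0) → ℝ) (t : ℕ)
    (h : Finset.univ.val.map (cr E hdE colG t) = Finset.univ.val.map (cr F hdF colH t)) :
    ∑ v : V, gnn E hdE g colG t v = ∑ w : W, gnn F hdF g colH t w := by
  have hV : ∑ v : V, gnn E hdE g colG t v
      = ((Finset.univ.val.map (cr E hdE colG t)).map (crToEmb g t)).sum := by
    rw [Finset.sum, Multiset.map_map]
    exact congrArg Multiset.sum (Multiset.map_congr rfl fun v _ => gnn_eq_crToEmb E hdE g colG t v)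
  have hW : ∑ w : W, gnn F hdF g colH t w
      = ((Finset.univ.val.map (cr F hdF colH t)).map (crToEmb g t)).sum := by
    rw [Finset.sum, Multiset.map_map]
    exact congrArg Multiset.sum (Multiset.map_congr rfl fun w _ => gnn_eq_crToEmb F hdF g colH t w)
  rw [hV, hW, h]
end
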